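/- arXiv:2011.03774 — 3 statements merged into one kernel-verified Lean document; each statement's English description precedes it below -/
import Mathlib

section
/- For all vectors a, b in ℝ^N and every real r ≥ 2, |b|^r ≥ |a|^r + r|a|^{r-2} a·(b-a) + 2^{1-r}|a-b|^r, where |·| is the Euclidean norm and · the Euclidean inner product. -/
/-!
The function `f = ‖·‖ ^ r` is convex with gradient `r ‖a‖ ^ (r - 2) a`, so its tangent at `a`
lies below it at the midpoint `m = (a + b) / 2`. Clarkson's inequality
`‖a + b‖ ^ r + ‖a - b‖ ^ r ≤ 2 ^ (r - 1) (‖a‖ ^ r + ‖b‖ ^ r)` bounds `f m` by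
`(f a + f b) / 2 - f ((a - b) / 2)`, and the two together give the claim.
-/

open Real
open scoped RealInnerProductSpace

namespace Real

lemma rpow_add_mul_rpow_sub_one_mul_sub_le {x t r : ℝ} (hx : 0 < x) (ht : 0 ≤ t) (hr : 1 ≤ r) :
    x ^ r + r * x ^ (r - 1) * (t - x) ≤ t ^ r := by
  have bernoulli := one_add_mul_self_le_rpow_one_add
    (by linarith [div_nonneg ht hx.le] : (-1 : ℝ) ≤ t / x - 1) hr
  rw [add_sub_cancel, div_rpow ht hx.le, le_div_iff₀ (rpow_pos_of_pos hx r)] at bernoulli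
  calc x ^ r + r * x ^ (r - 1) * (t - x) = (1 + r * (t / x - 1)) * x ^ r := by
        rw [rpow_sub_one hx.ne']; field_simp
    _ ≤ t ^ r := bernoulli

lemma rpow_add_le_two_rpow_mul_rpow_add_rpow {u v p : ℝ} (hu : 0 ≤ u) (hv : 0 ≤ v) (hp : 1 ≤ p) :
    (u + v) ^ p ≤ 2 ^ (p - 1) * (u ^ p + v ^ p) := by
  lift u to NNReal using hu
  lift v to NNReal using hv
  exact_mod_cast NNReal.rpow_add_le_mul_rpow_add_rpow u v hp

lemma sq_rpow_half {x : ℝ} (hx : 0 ≤ x) (r : ℝ) : (x ^ 2) ^ (r / 2) = x ^ r := by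
  rw [← rpow_natCast_mul hx, Nat.cast_ofNat, mul_div_cancel₀ r two_ne_zero]

end Real

section InnerProductSpace

variable {E : Type*} [NormedAddCommGroup E] [InnerProductSpace ℝ E]

lemma norm_rpow_add_inner_le {r : ℝ} (hr : 1 ≤ r) (a c : E) :
    ‖a‖ ^ r + r * ‖a‖ ^ (r - 2) * ⟪a, c - a⟫ ≤ ‖c‖ ^ r := by
  rcases eq_or_ne a 0 with rfl | ha
  · simp [zero_rpow (by linarith : r ≠ 0), rpow_nonneg (norm_nonneg c)]
  have ha' : 0 < ‖a‖ := norm_pos_iff.mpr ha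
  have cauchy_schwarz : ⟪a, c - a⟫ ≤ ‖a‖ * (‖c‖ - ‖a‖) := by
    rw [inner_sub_right, real_inner_self_eq_norm_sq]
    nlinarith [real_inner_le_norm a c]
  calc ‖a‖ ^ r + r * ‖a‖ ^ (r - 2) * ⟪a, c - a⟫
      ≤ ‖a‖ ^ r + r * ‖a‖ ^ (r - 2) * (‖a‖ * (‖c‖ - ‖a‖)) := by gcongr
    _ = ‖a‖ ^ r + r * ‖a‖ ^ (r - 1) * (‖c‖ - ‖a‖) := by
        rw [show r - 1 = r - 2 + 1 by ring, rpow_add_one ha'.ne']; ring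
    _ ≤ ‖c‖ ^ r := rpow_add_mul_rpow_sub_one_mul_sub_le ha' (norm_nonneg c) hr

lemma norm_add_rpow_add_norm_sub_rpow_le {r : ℝ} (hr : 2 ≤ r) (a b : E) :
    ‖a + b‖ ^ r + ‖a - b‖ ^ r ≤ 2 ^ (r - 1) * (‖a‖ ^ r + ‖b‖ ^ r) := by
  have two_mul_sq_rpow (x : ℝ) (hx : 0 ≤ x) : (2 * x ^ 2) ^ (r / 2) = 2 ^ (r / 2) * x ^ r := by
    rw [mul_rpow zero_le_two (sq_nonneg x), sq_rpow_half hx]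
  calc ‖a + b‖ ^ r + ‖a - b‖ ^ r
      = (‖a + b‖ ^ 2) ^ (r / 2) + (‖a - b‖ ^ 2) ^ (r / 2) := by
        rw [sq_rpow_half (norm_nonneg _), sq_rpow_half (norm_nonneg _)]
    _ ≤ (‖a + b‖ ^ 2 + ‖a - b‖ ^ 2) ^ (r / 2) :=
        add_rpow_le_rpow_add (sq_nonneg _) (sq_nonneg _) (by linarith)
    _ = (2 * ‖a‖ ^ 2 + 2 * ‖b‖ ^ 2) ^ (r / 2) := by
        rw [parallelogram_law_with_norm ℝ a b, mul_add]
    _ ≤ 2 ^ (r / 2 - 1) * ((2 * ‖a‖ ^ 2) ^ (r / 2) + (2 * ‖b‖ ^ 2) ^ (r / 2)) :=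
        rpow_add_le_two_rpow_mul_rpow_add_rpow (by positivity) (by positivity) (by linarith)
    _ = 2 ^ (r - 1) * (‖a‖ ^ r + ‖b‖ ^ r) := by
        rw [two_mul_sq_rpow _ (norm_nonneg a), two_mul_sq_rpow _ (norm_nonneg b), ← mul_add,
          ← mul_assoc, ← rpow_add zero_lt_two]
        ring_nf

end InnerProductSpace

theorem stmt_1_general (N : ℕ) (a b : EuclideanSpace ℝ (Fin N)) (r : ℝ) (hr : 2 ≤ r) :
    ‖a‖ ^ r + r * ‖a‖ ^ (r - 2) * ⟪a, b - a⟫ + 2 ^ (1 - r) * ‖a - b‖ ^ r ≤ ‖b‖ ^ r := by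
  have tangent := norm_rpow_add_inner_le (by linarith) a ((2 : ℝ)⁻¹ • (a + b))
  have clarkson := norm_add_rpow_add_norm_sub_rpow_le hr a b
  have hmid : ⟪a, (2 : ℝ)⁻¹ • (a + b) - a⟫ = 2⁻¹ * ⟪a, b - a⟫ := by
    rw [show (2 : ℝ)⁻¹ • (a + b) - a = (2 : ℝ)⁻¹ • (b - a) by module, real_inner_smul_right]
  have hnorm : ‖(2 : ℝ)⁻¹ • (a + b)‖ ^ r = 2 ^ (-r) * ‖a + b‖ ^ r := by
    rw [norm_smul, mul_rpow (by positivity) (norm_nonneg _), norm_inv, Real.norm_ofNat,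
      inv_rpow zero_le_two, rpow_neg zero_le_two]
  have hscale : (2 : ℝ) ^ (-r) * 2 ^ (r - 1) = 2⁻¹ := by
    rw [← rpow_add zero_lt_two, show -r + (r - 1) = -1 by ring, rpow_neg_one]
  have htwo : (2 : ℝ) ^ (1 - r) = 2 * 2 ^ (-r) := by
    rw [sub_eq_add_neg, rpow_add zero_lt_two, rpow_one]
  rw [hmid, hnorm] at tangent
  have scaled := mul_le_mul_of_nonneg_left clarkson (by positivity : (0 : ℝ) ≤ 2 ^ (-r))
  rw [mul_add, ← mul_assoc, hscale] at scaled
  rw [htwo]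
  linarith

theorem stmt_1 (N : ℕ) (hN : 1 ≤ N) (a b : EuclideanSpace ℝ (Fin N)) (r : ℝ) (hr : 2 ≤ r) :
    ‖a‖ ^ r + r * ‖a‖ ^ (r - 2) * ⟪a, b - a⟫ + 2 ^ (1 - r) * ‖a - b‖ ^ r ≤ ‖b‖ ^ r :=
  stmt_1_general N a b r hr
end

section
/- Let F : ℝ^N → [0,∞) be positively homogeneous of degree one (F(tx) = t F(x) for t > 0), convex, smooth away from 0, with F(x) > 0 for x ≠ 0. If F satisfies the uniform convexity inequality F²((ξ+β)/2) ≤ (F²(ξ)+F²(β))/2 − (l/4) F²(β−ξ) for some constant l ≥ 0 and all ξ, β ∈ ℝ^N, then for every r ≥ 2 and all ξ, β ∈ ℝ^N (with ξ ≠ 0) one has F^r(β) ≥ F^r(ξ) + r F^{r-1}(ξ) ∇F(ξ)·(β−ξ) + (l^{r/2}/2^{r-1}) F^r(β−ξ). -/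
/-!
Let `m = (ξ + β) / 2`. Raising the uniform convexity inequality for `F²` to the power `r / 2`
(using monotonicity, superadditivity and convexity of `t ↦ t ^ (r / 2)` on `[0, ∞)`) gives
`F(m)^r ≤ (F(ξ)^r + F(β)^r) / 2 - l^(r/2) / 2^r F(β - ξ)^r`.
On the other hand the tangent plane of `F` at `ξ` and the tangent line of `t ↦ t ^ r` at `F(ξ)`
bound `F(m)^r` from below by `F(ξ)^r + (r / 2) F(ξ)^(r-1) ∇F(ξ)·(β - ξ)`.
Comparing the two bounds and multiplying by `2` gives the inequality.
-/

open Real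

theorem ConvexOn.add_mul_sub_le_of_hasDerivAt {S : Set ℝ} {f : ℝ → ℝ} {f' x y : ℝ}
    (hf : ConvexOn ℝ S f) (hx : x ∈ S) (hy : y ∈ S) (hf' : HasDerivAt f f' x) :
    f x + f' * (y - x) ≤ f y := by
  rcases lt_trichotomy x y with hxy | rfl | hyx
  · have h := hf.le_slope_of_hasDerivAt hx hy hxy hf'
    rw [slope_def_field, le_div_iff₀ (sub_pos.2 hxy)] at h
    linarith
  · simp
  · have h := hf.slope_le_of_hasDerivAt hy hx hyx hf'
    rw [slope_def_field, div_le_iff₀ (sub_pos.2 hyx)] at h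
    linarith

theorem ConvexOn.add_fderiv_sub_le {E : Type*} [NormedAddCommGroup E] [NormedSpace ℝ E]
    {s : Set E} {F : E → ℝ} {x y : E} (hF : ConvexOn ℝ s F) (hx : x ∈ s) (hy : y ∈ s)
    (hd : DifferentiableAt ℝ F x) :
    F x + fderiv ℝ F x (y - x) ≤ F y := by
  let line : ℝ →ᵃ[ℝ] E := AffineMap.lineMap x y
  have hline : HasDerivAt line (y - x) 0 := by
    simpa [line] using AffineMap.hasDerivAt_lineMap (a := x) (b := y) (x := (0 : ℝ))
  have hderiv : HasDerivAt (F ∘ line) (fderiv ℝ F x (y - x)) 0 := by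
    refine HasFDerivAt.comp_hasDerivAt (0 : ℝ) ?_ hline
    simpa [line] using hd.hasFDerivAt
  have h := (hF.comp_affineMap line).add_mul_sub_le_of_hasDerivAt
    (x := 0) (y := 1) (by simpa [line] using hx) (by simpa [line] using hy) hderiv
  simpa [line] using h

theorem Real.rpow_add_mul_rpow_sub_one_mul_sub_le_s2 {a b p : ℝ} (ha : 0 ≤ a) (hb : 0 ≤ b)
    (hp : 1 ≤ p) :
    b ^ p + p * b ^ (p - 1) * (a - b) ≤ a ^ p :=
  (convexOn_rpow hp).add_mul_sub_le_of_hasDerivAt hb ha (hasDerivAt_rpow_const (Or.inr hp))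

theorem Real.rpow_le_avg_rpow_sub_rpow {a b c m p : ℝ} (ha : 0 ≤ a) (hb : 0 ≤ b) (hc : 0 ≤ c)
    (hm : 0 ≤ m) (hp : 1 ≤ p) (h : m ≤ (a + b) / 2 - c) :
    m ^ p ≤ (a ^ p + b ^ p) / 2 - c ^ p := by
  have hmono : m ^ p ≤ ((a + b) / 2 - c) ^ p := rpow_le_rpow hm h (by linarith)
  have hsuper : ((a + b) / 2 - c) ^ p + c ^ p ≤ ((a + b) / 2) ^ p := by
    simpa using add_rpow_le_rpow_add (hm.trans h) hc hp
  have hmid : ((a + b) / 2) ^ p ≤ (a ^ p + b ^ p) / 2 := by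
    have h := (convexOn_rpow hp).2 ha hb (by norm_num : (0 : ℝ) ≤ 1 / 2)
      (by norm_num : (0 : ℝ) ≤ 1 / 2) (by norm_num)
    simp only [smul_eq_mul] at h
    calc ((a + b) / 2) ^ p = (1 / 2 * a + 1 / 2 * b) ^ p := by ring_nf
      _ ≤ 1 / 2 * a ^ p + 1 / 2 * b ^ p := h
      _ = (a ^ p + b ^ p) / 2 := by ring
  linarith

theorem stmt_2_general (N : ℕ) (F : EuclideanSpace ℝ (Fin N) → ℝ) (l : ℝ) (hl : 0 ≤ l)
    (hFnonneg : ∀ x, 0 ≤ F x)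
    (hFconv : ConvexOn ℝ Set.univ F)
    (hFdiff : ∀ x : EuclideanSpace ℝ (Fin N), x ≠ 0 → DifferentiableAt ℝ F x)
    (hUC : ∀ ξ β : EuclideanSpace ℝ (Fin N),
      F ((1 / 2 : ℝ) • (ξ + β)) ^ (2:ℝ)
        ≤ (F ξ ^ (2:ℝ) + F β ^ (2:ℝ)) / 2 - l / 4 * F (β - ξ) ^ (2:ℝ))
    (r : ℝ) (hr : 2 ≤ r) (ξ β : EuclideanSpace ℝ (Fin N)) (hξ : ξ ≠ 0) :
    F ξ ^ r + r * F ξ ^ (r - 1) * fderiv ℝ F ξ (β - ξ)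
      + l ^ (r / 2) / 2 ^ (r - 1) * F (β - ξ) ^ r ≤ F β ^ r := by
  set m := (1 / 2 : ℝ) • (ξ + β)
  have hFsq_nonneg : ∀ x, 0 ≤ F x ^ (2 : ℝ) := fun x => rpow_nonneg (hFnonneg x) _
  have hsq : ∀ {a : ℝ}, 0 ≤ a → (a ^ (2 : ℝ)) ^ (r / 2) = a ^ r := fun ha => by
    rw [← rpow_mul ha]; ring_nf
  have hsub : F ξ + 1 / 2 * fderiv ℝ F ξ (β - ξ) ≤ F m := by
    have h := hFconv.add_fderiv_sub_le (Set.mem_univ ξ) (Set.mem_univ m) (hFdiff ξ hξ)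
    rwa [show m - ξ = (1 / 2 : ℝ) • (β - ξ) by module, map_smul, smul_eq_mul] at h
  have htangent := rpow_add_mul_rpow_sub_one_mul_sub_le_s2 (hFnonneg m) (hFnonneg ξ)
    (by linarith : (1 : ℝ) ≤ r)
  have hUCr : F m ^ r ≤ (F ξ ^ r + F β ^ r) / 2 - (l / 4 * F (β - ξ) ^ (2 : ℝ)) ^ (r / 2) := by
    have := rpow_le_avg_rpow_sub_rpow (hFsq_nonneg ξ) (hFsq_nonneg β)
      (mul_nonneg (by positivity) (hFsq_nonneg _)) (hFsq_nonneg m) (by linarith : (1 : ℝ) ≤ r / 2)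
      (hUC ξ β)
    rwa [hsq (hFnonneg _), hsq (hFnonneg _), hsq (hFnonneg _)] at this
  have hconst : (l / 4 * F (β - ξ) ^ (2 : ℝ)) ^ (r / 2)
      = 1 / 2 * (l ^ (r / 2) / 2 ^ (r - 1) * F (β - ξ) ^ r) := by
    rw [mul_rpow (by positivity) (hFsq_nonneg _), hsq (hFnonneg _), div_rpow hl (by norm_num),
      show (4 : ℝ) = 2 ^ (2 : ℝ) by norm_num, hsq (by norm_num),
      rpow_sub (by norm_num), rpow_one]
    ring
  have hslope : 0 ≤ r * F ξ ^ (r - 1) := by have := hFnonneg ξ; positivity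
  linarith [mul_le_mul_of_nonneg_left hsub hslope]

theorem stmt_2 (N : ℕ) (F : EuclideanSpace ℝ (Fin N) → ℝ) (l : ℝ) (hl : 0 ≤ l)
    (hFnonneg : ∀ x, 0 ≤ F x)
    (hFhom : ∀ (t : ℝ), 0 < t → ∀ x, F (t • x) = t * F x)
    (hFconv : ConvexOn ℝ Set.univ F)
    (hFdiff : ∀ x : EuclideanSpace ℝ (Fin N), x ≠ 0 → DifferentiableAt ℝ F x)
    (hFpos : ∀ x : EuclideanSpace ℝ (Fin N), x ≠ 0 → 0 < F x)
    (hUC : ∀ ξ β : EuclideanSpace ℝ (Fin N),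
      F ((1 / 2 : ℝ) • (ξ + β)) ^ (2:ℝ)
        ≤ (F ξ ^ (2:ℝ) + F β ^ (2:ℝ)) / 2 - l / 4 * F (β - ξ) ^ (2:ℝ))
    (r : ℝ) (hr : 2 ≤ r) (ξ β : EuclideanSpace ℝ (Fin N)) (hξ : ξ ≠ 0) :
    F ξ ^ r + r * F ξ ^ (r - 1) * fderiv ℝ F ξ (β - ξ)
      + l ^ (r / 2) / 2 ^ (r - 1) * F (β - ξ) ^ r ≤ F β ^ r :=
  stmt_2_general N F l hl hFnonneg hFconv hFdiff hUC r hr ξ β hξ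
end

section
/- Let F : ℝ^N → [0,∞) be a Minkowski norm satisfying the uniform convexity inequality with constant l ∈ [0,1]. Then for every r ≥ 2 and all ξ, β ∈ ℝ^N: F^r((ξ+β)/2) + (l^{r/2}/2^r) F^r(β−ξ) ≤ ((F²(ξ)+F²(β))/2)^{r/2}. -/
open Real

/-! Write `y = (√l / 2) F(β - ξ)`, so that uniform convexity reads `F²((ξ+β)/2) + y² ≤ S` with
`S = (F²(ξ) + F²(β))/2`. Raising to the power `r/2 ≥ 1` and using the superadditivity
`a^p + b^p ≤ (a + b)^p` of `t ↦ t^p` on `[0, ∞)` gives `F^r((ξ+β)/2) + y^r ≤ S^(r/2)`. -/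

lemma Real.rpow_add_rpow_le_of_sq_add_sq_le {x y S r : ℝ} (hx : 0 ≤ x) (hy : 0 ≤ y) (hr : 2 ≤ r)
    (h : x ^ (2:ℝ) + y ^ (2:ℝ) ≤ S) : x ^ r + y ^ r ≤ S ^ (r / 2) := by
  have hsq (t : ℝ) (ht : 0 ≤ t) : t ^ r = (t ^ (2:ℝ)) ^ (r / 2) := by
    rw [← rpow_mul ht]
    ring_nf
  rw [hsq x hx, hsq y hy]
  calc (x ^ (2:ℝ)) ^ (r / 2) + (y ^ (2:ℝ)) ^ (r / 2)
      ≤ (x ^ (2:ℝ) + y ^ (2:ℝ)) ^ (r / 2) :=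
        add_rpow_le_rpow_add (by positivity) (by positivity) (by linarith)
    _ ≤ S ^ (r / 2) := by gcongr

lemma Real.sqrt_div_two_mul_rpow {l d : ℝ} (hl : 0 ≤ l) (hd : 0 ≤ d) (r : ℝ) :
    (√l / 2 * d) ^ r = l ^ (r / 2) / 2 ^ r * d ^ r := by
  rw [mul_rpow (by positivity) hd, div_rpow (sqrt_nonneg l) zero_le_two, sqrt_eq_rpow,
    ← rpow_mul hl]
  ring_nf

theorem stmt_3_general (N : ℕ) (F : EuclideanSpace ℝ (Fin N) → ℝ) (l : ℝ) (hl0 : 0 ≤ l)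
    (hFnonneg : ∀ x, 0 ≤ F x)
    (hUC : ∀ ξ β : EuclideanSpace ℝ (Fin N),
      F ((1 / 2 : ℝ) • (ξ + β)) ^ (2:ℝ)
        ≤ (F ξ ^ (2:ℝ) + F β ^ (2:ℝ)) / 2 - l / 4 * F (β - ξ) ^ (2:ℝ))
    (r : ℝ) (hr : 2 ≤ r) (ξ β : EuclideanSpace ℝ (Fin N)) :
    F ((1 / 2 : ℝ) • (ξ + β)) ^ r + l ^ (r / 2) / 2 ^ r * F (β - ξ) ^ r
      ≤ ((F ξ ^ (2:ℝ) + F β ^ (2:ℝ)) / 2) ^ (r / 2) := by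
  have hd := hFnonneg (β - ξ)
  have hy_sq : (√l / 2 * F (β - ξ)) ^ (2:ℝ) = l / 4 * F (β - ξ) ^ (2:ℝ) := by
    rw [sqrt_div_two_mul_rpow hl0 hd, div_self two_ne_zero, rpow_one]
    norm_num
  rw [← sqrt_div_two_mul_rpow hl0 hd]
  exact rpow_add_rpow_le_of_sq_add_sq_le (hFnonneg _) (by positivity) hr
    (by linarith [hUC ξ β])

theorem stmt_3 (N : ℕ) (F : EuclideanSpace ℝ (Fin N) → ℝ) (l : ℝ) (hl0 : 0 ≤ l) (hl1 : l ≤ 1)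
    (hFnonneg : ∀ x, 0 ≤ F x)
    (hFhom : ∀ (t : ℝ), 0 < t → ∀ x, F (t • x) = t * F x)
    (hFconv : ConvexOn ℝ Set.univ F)
    (hFpos : ∀ x : EuclideanSpace ℝ (Fin N), x ≠ 0 → 0 < F x)
    (hUC : ∀ ξ β : EuclideanSpace ℝ (Fin N),
      F ((1 / 2 : ℝ) • (ξ + β)) ^ (2:ℝ)
        ≤ (F ξ ^ (2:ℝ) + F β ^ (2:ℝ)) / 2 - l / 4 * F (β - ξ) ^ (2:ℝ))
    (r : ℝ) (hr : 2 ≤ r) (ξ β : EuclideanSpace ℝ (Fin N)) :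
    F ((1 / 2 : ℝ) • (ξ + β)) ^ r + l ^ (r / 2) / 2 ^ r * F (β - ξ) ^ r
      ≤ ((F ξ ^ (2:ℝ) + F β ^ (2:ℝ)) / 2) ^ (r / 2) :=
  stmt_3_general N F l hl0 hFnonneg hUC r hr ξ β
end
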